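/- arXiv:1602.02602 — 2 statements merged into one kernel-verified Lean document; each statement's English description precedes it below -/
import Mathlib

section
/- Let G be an ample groupoid and let X ⊆ G⁰ be a G-full open set. Then the space GX = s⁻¹(X), with G acting on the left and G|_X acting on the right by multiplication in G, and with anchor maps the restrictions of r and s, is a G–(G|_X) equivalence. Consequently G and G|_X are groupoid equivalent. -/
universe u v w

/-- An (algebraic) groupoid structure on a type `G` of arrows.  The multiplication is a total
function, but all axioms involving `mul a b` are only imposed when `a` and `b` are composable,
i.e. when `src a = rng b`.  Units are the common values of `src` and `rng`. -/
structure GroupoidStruct (G : Type u) where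
  src : G → G
  rng : G → G
  mul : G → G → G
  inv : G → G
  src_src : ∀ a, src (src a) = src a
  rng_src : ∀ a, rng (src a) = src a
  src_rng : ∀ a, src (rng a) = rng a
  rng_rng : ∀ a, rng (rng a) = rng a
  mul_assoc : ∀ a b c, src a = rng b → src b = rng c → mul (mul a b) c = mul a (mul b c)
  src_mul : ∀ a b, src a = rng b → src (mul a b) = src b
  rng_mul : ∀ a b, src a = rng b → rng (mul a b) = rng a
  mul_src : ∀ a, mul a (src a) = a
  rng_mul_self : ∀ a, mul (rng a) a = a
  src_inv : ∀ a, src (inv a) = rng a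
  rng_inv : ∀ a, rng (inv a) = src a
  mul_inv : ∀ a, mul a (inv a) = rng a
  inv_mul : ∀ a, mul (inv a) a = src a

namespace GroupoidStruct

variable {G : Type u} {H : Type v}

/-- The unit space `G⁰` of a groupoid. -/
def units (S : GroupoidStruct G) : Set G := {x | S.src x = x ∧ S.rng x = x}

/-- The range map, viewed as a map `G → G⁰`. -/
def rngMap (S : GroupoidStruct G) (g : G) : S.units := ⟨S.rng g, S.src_rng g, S.rng_rng g⟩

/-- The source map, viewed as a map `G → G⁰`. -/
def srcMap (S : GroupoidStruct G) (g : G) : S.units := ⟨S.src g, S.src_src g, S.rng_src g⟩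

/-- A topological groupoid: inversion is continuous and multiplication is continuous on the
set of composable pairs. -/
structure IsTopologicalGroupoid [TopologicalSpace G] (S : GroupoidStruct G) : Prop where
  continuous_inv : Continuous S.inv
  continuousOn_mul :
    ContinuousOn (fun p : G × G => S.mul p.1 p.2) {p : G × G | S.src p.1 = S.rng p.2}

/-- An ample groupoid: a topological groupoid whose topology has a basis of compact open sets,
whose unit space is Hausdorff, and whose range and source maps are local homeomorphisms onto
the unit space. -/
structure IsAmple [TopologicalSpace G] (S : GroupoidStruct G)
    extends IsTopologicalGroupoid S : Prop where
  compact_open_basis : ∃ B : Set (Set G),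
    (∀ U ∈ B, IsCompact U ∧ IsOpen U) ∧ TopologicalSpace.IsTopologicalBasis B
  t2_units : T2Space S.units
  isLocalHomeomorph_rngMap : IsLocalHomeomorph S.rngMap
  isLocalHomeomorph_srcMap : IsLocalHomeomorph S.srcMap

/-- `K ⊆ G⁰` is `G`-full if `r(GK) = G⁰`, where `GK = s⁻¹(K)`. -/
def IsFull (S : GroupoidStruct G) (K : Set G) : Prop := S.rng '' (S.src ⁻¹' K) = S.units

/-- `K` is an open subset of the unit space (in the subspace topology of `G⁰`). -/
def IsUnitOpen [TopologicalSpace G] (S : GroupoidStruct G) (K : Set G) : Prop :=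
  K ⊆ S.units ∧ IsOpen {x : S.units | (x : G) ∈ K}

/-- `K` is a clopen subset of the unit space (in the subspace topology of `G⁰`). -/
def IsUnitClopen [TopologicalSpace G] (S : GroupoidStruct G) (K : Set G) : Prop :=
  K ⊆ S.units ∧ IsClopen {x : S.units | (x : G) ∈ K}

/-- `K` is a compact open subset of the unit space. -/
def IsUnitCompactOpen [TopologicalSpace G] (S : GroupoidStruct G) (K : Set G) : Prop :=
  K ⊆ S.units ∧ IsCompact K ∧ IsOpen {x : S.units | (x : G) ∈ K}

/-- An open bisection: an open set on which both the range and the source map restrict to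
homeomorphisms onto their images (i.e. are topological embeddings). -/
def IsOpenBisection [TopologicalSpace G] (S : GroupoidStruct G) (U : Set G) : Prop :=
  IsOpen U ∧ Topology.IsEmbedding (U.restrict S.rng) ∧ Topology.IsEmbedding (U.restrict S.src)

/-- A compact open bisection. -/
def IsCompactOpenBisection [TopologicalSpace G] (S : GroupoidStruct G) (U : Set G) : Prop :=
  IsCompact U ∧ S.IsOpenBisection U

/-- The product of two groupoids, with coordinatewise operations. -/
def prod (S : GroupoidStruct G) (T : GroupoidStruct H) : GroupoidStruct (G × H) where
  src p := (S.src p.1, T.src p.2)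
  rng p := (S.rng p.1, T.rng p.2)
  mul p q := (S.mul p.1 q.1, T.mul p.2 q.2)
  inv p := (S.inv p.1, T.inv p.2)
  src_src a := Prod.ext_iff.mpr ⟨S.src_src _, T.src_src _⟩
  rng_src a := Prod.ext_iff.mpr ⟨S.rng_src _, T.rng_src _⟩
  src_rng a := Prod.ext_iff.mpr ⟨S.src_rng _, T.src_rng _⟩
  rng_rng a := Prod.ext_iff.mpr ⟨S.rng_rng _, T.rng_rng _⟩
  mul_assoc a b c h1 h2 := by
    obtain ⟨h1a, h1b⟩ := Prod.ext_iff.mp h1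
    obtain ⟨h2a, h2b⟩ := Prod.ext_iff.mp h2
    exact Prod.ext_iff.mpr ⟨S.mul_assoc _ _ _ h1a h2a, T.mul_assoc _ _ _ h1b h2b⟩
  src_mul a b h := by
    obtain ⟨ha, hb⟩ := Prod.ext_iff.mp h
    exact Prod.ext_iff.mpr ⟨S.src_mul _ _ ha, T.src_mul _ _ hb⟩
  rng_mul a b h := by
    obtain ⟨ha, hb⟩ := Prod.ext_iff.mp h
    exact Prod.ext_iff.mpr ⟨S.rng_mul _ _ ha, T.rng_mul _ _ hb⟩
  mul_src a := Prod.ext_iff.mpr ⟨S.mul_src _, T.mul_src _⟩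
  rng_mul_self a := Prod.ext_iff.mpr ⟨S.rng_mul_self _, T.rng_mul_self _⟩
  src_inv a := Prod.ext_iff.mpr ⟨S.src_inv _, T.src_inv _⟩
  rng_inv a := Prod.ext_iff.mpr ⟨S.rng_inv _, T.rng_inv _⟩
  mul_inv a := Prod.ext_iff.mpr ⟨S.mul_inv _, T.mul_inv _⟩
  inv_mul a := Prod.ext_iff.mpr ⟨S.inv_mul _, T.inv_mul _⟩

/-- The full equivalence relation `ℛ = ℕ × ℕ`, regarded as a (discrete, principal) groupoid
with unit space `ℕ`. -/
def Rho : GroupoidStruct (ℕ × ℕ) where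
  src p := (p.2, p.2)
  rng p := (p.1, p.1)
  mul p q := (p.1, q.2)
  inv p := (p.2, p.1)
  src_src _ := rfl
  rng_src _ := rfl
  src_rng _ := rfl
  rng_rng _ := rfl
  mul_assoc _ _ _ _ _ := rfl
  src_mul _ _ _ := rfl
  rng_mul _ _ _ := rfl
  mul_src _ := rfl
  rng_mul_self _ := rfl
  src_inv _ := rfl
  rng_inv _ := rfl
  mul_inv _ := rfl
  inv_mul _ := rfl

/-- An isomorphism of topological groupoids: a homeomorphism of the arrow spaces respecting
all the groupoid operations. -/
structure GroupoidIso [TopologicalSpace G] [TopologicalSpace H]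
    (S : GroupoidStruct G) (T : GroupoidStruct H) extends G ≃ₜ H where
  map_mul : ∀ a b, S.src a = S.rng b →
    toHomeomorph (S.mul a b) = T.mul (toHomeomorph a) (toHomeomorph b)
  map_inv : ∀ a, toHomeomorph (S.inv a) = T.inv (toHomeomorph a)
  map_src : ∀ a, toHomeomorph (S.src a) = T.src (toHomeomorph a)
  map_rng : ∀ a, toHomeomorph (S.rng a) = T.rng (toHomeomorph a)

/-- The arrow space `G|_K = r⁻¹(K) ∩ s⁻¹(K)` of the restriction of `G` to `K ⊆ G⁰`,
with the subspace topology. -/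
abbrev Restrict (S : GroupoidStruct G) (K : Set G) : Type u :=
  {g : G // S.rng g ∈ K ∧ S.src g ∈ K}

variable (S : GroupoidStruct G) (K : Set G)

def rsrc (a : S.Restrict K) : S.Restrict K :=
  ⟨S.src a.1, by rw [S.rng_src]; exact a.2.2, by rw [S.src_src]; exact a.2.2⟩

def rrng (a : S.Restrict K) : S.Restrict K :=
  ⟨S.rng a.1, by rw [S.rng_rng]; exact a.2.1, by rw [S.src_rng]; exact a.2.1⟩

def rinv (a : S.Restrict K) : S.Restrict K :=
  ⟨S.inv a.1, by rw [S.rng_inv]; exact a.2.2, by rw [S.src_inv]; exact a.2.1⟩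

open Classical in
noncomputable def rmul (a b : S.Restrict K) : S.Restrict K :=
  if h : S.src a.1 = S.rng b.1 then
    ⟨S.mul a.1 b.1, by rw [S.rng_mul _ _ h]; exact a.2.1, by rw [S.src_mul _ _ h]; exact b.2.2⟩
  else a

@[simp] lemma rsrc_val (a : S.Restrict K) : (S.rsrc K a).1 = S.src a.1 := rfl
@[simp] lemma rrng_val (a : S.Restrict K) : (S.rrng K a).1 = S.rng a.1 := rfl
@[simp] lemma rinv_val (a : S.Restrict K) : (S.rinv K a).1 = S.inv a.1 := rfl

lemma rmul_val (a b : S.Restrict K) (h : S.src a.1 = S.rng b.1) :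
    (S.rmul K a b).1 = S.mul a.1 b.1 := by
  unfold rmul
  rw [dif_pos h]

/-- The restriction `G|_K` of a groupoid to a subset `K` of its unit space. -/
noncomputable def restrict : GroupoidStruct (S.Restrict K) where
  src := S.rsrc K
  rng := S.rrng K
  mul := S.rmul K
  inv := S.rinv K
  src_src a := Subtype.ext (S.src_src a.1)
  rng_src a := Subtype.ext (S.rng_src a.1)
  src_rng a := Subtype.ext (S.src_rng a.1)
  rng_rng a := Subtype.ext (S.rng_rng a.1)
  mul_assoc a b c h1 h2 := by
    have h1' : S.src a.1 = S.rng b.1 := congrArg Subtype.val h1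
    have h2' : S.src b.1 = S.rng c.1 := congrArg Subtype.val h2
    have hab := S.rmul_val K a b h1'
    have hbc := S.rmul_val K b c h2'
    apply Subtype.ext
    calc (S.rmul K (S.rmul K a b) c).1
        = S.mul (S.rmul K a b).1 c.1 :=
          S.rmul_val K _ _ (by rw [hab, S.src_mul _ _ h1']; exact h2')
      _ = S.mul (S.mul a.1 b.1) c.1 := by rw [hab]
      _ = S.mul a.1 (S.mul b.1 c.1) := S.mul_assoc _ _ _ h1' h2'
      _ = S.mul a.1 (S.rmul K b c).1 := by rw [hbc]
      _ = (S.rmul K a (S.rmul K b c)).1 :=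
          (S.rmul_val K _ _ (by rw [hbc, S.rng_mul _ _ h2']; exact h1')).symm
  src_mul a b h := by
    have h' : S.src a.1 = S.rng b.1 := congrArg Subtype.val h
    apply Subtype.ext
    show S.src (S.rmul K a b).1 = S.src b.1
    rw [S.rmul_val K a b h', S.src_mul _ _ h']
  rng_mul a b h := by
    have h' : S.src a.1 = S.rng b.1 := congrArg Subtype.val h
    apply Subtype.ext
    show S.rng (S.rmul K a b).1 = S.rng a.1
    rw [S.rmul_val K a b h', S.rng_mul _ _ h']
  mul_src a := by
    apply Subtype.ext
    rw [S.rmul_val K a _ (by rw [rsrc_val, S.rng_src]), rsrc_val]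
    exact S.mul_src a.1
  rng_mul_self a := by
    apply Subtype.ext
    rw [S.rmul_val K _ a (by rw [rrng_val, S.src_rng]), rrng_val]
    exact S.rng_mul_self a.1
  src_inv a := Subtype.ext (S.src_inv a.1)
  rng_inv a := Subtype.ext (S.rng_inv a.1)
  mul_inv a := by
    apply Subtype.ext
    rw [S.rmul_val K a _ (by rw [rinv_val, S.rng_inv]), rinv_val]
    exact S.mul_inv a.1
  inv_mul a := by
    apply Subtype.ext
    rw [S.rmul_val K _ a (by rw [rinv_val, S.src_inv]), rinv_val]
    exact S.inv_mul a.1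

variable {S K}

/-- The data of a groupoid equivalence between `G` and `H`: a space `Z` carrying commuting
free and proper continuous actions of `G` (on the left) and `H` (on the right), whose anchor
maps `ρ : Z → G⁰` and `σ : Z → H⁰` induce homeomorphisms `Z/H ≅ G⁰` and `G\Z ≅ H⁰`.
The latter conditions are encoded by requiring that the fibres of `ρ` are exactly the
`H`-orbits, that `ρ` is surjective onto `G⁰`, and that `ρ` is a topological quotient map onto
`G⁰` (and symmetrically for `σ`): this says precisely that the induced map `Z/H → G⁰` is a
homeomorphism. -/
structure GroupoidEquivalenceData [TopologicalSpace G] [TopologicalSpace H]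
    (S : GroupoidStruct G) (T : GroupoidStruct H) (Z : Type w) [TopologicalSpace Z] where
  ρ : Z → G
  σ : Z → H
  ρ_unit : ∀ z, ρ z ∈ S.units
  σ_unit : ∀ z, σ z ∈ T.units
  continuous_ρ : Continuous ρ
  continuous_σ : Continuous σ
  actL : G → Z → Z
  actR : Z → H → Z
  ρ_actL : ∀ g z, S.src g = ρ z → ρ (actL g z) = S.rng g
  σ_actL : ∀ g z, S.src g = ρ z → σ (actL g z) = σ z
  actL_unit : ∀ z, actL (ρ z) z = z
  actL_mul : ∀ g g' z, S.src g = S.rng g' → S.src g' = ρ z →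
    actL (S.mul g g') z = actL g (actL g' z)
  σ_actR : ∀ z h, σ z = T.rng h → σ (actR z h) = T.src h
  ρ_actR : ∀ z h, σ z = T.rng h → ρ (actR z h) = ρ z
  actR_unit : ∀ z, actR z (σ z) = z
  actR_mul : ∀ z h h', σ z = T.rng h → T.src h = T.rng h' →
    actR (actR z h) h' = actR z (T.mul h h')
  act_comm : ∀ g z h, S.src g = ρ z → σ z = T.rng h →
    actL g (actR z h) = actR (actL g z) h
  continuousOn_actL :
    ContinuousOn (fun p : G × Z => actL p.1 p.2) {p : G × Z | S.src p.1 = ρ p.2}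
  continuousOn_actR :
    ContinuousOn (fun p : Z × H => actR p.1 p.2) {p : Z × H | σ p.1 = T.rng p.2}
  free_actL : ∀ g z, S.src g = ρ z → actL g z = z → g = ρ z
  free_actR : ∀ z h, σ z = T.rng h → actR z h = z → h = σ z
  proper_actL : IsProperMap (fun p : {q : G × Z // S.src q.1 = ρ q.2} =>
    ((actL p.1.1 p.1.2, p.1.2) : Z × Z))
  proper_actR : IsProperMap (fun p : {q : Z × H // σ q.1 = T.rng q.2} =>
    ((actR p.1.1 p.1.2, p.1.1) : Z × Z))
  ρ_fiber_orbit : ∀ z z', ρ z = ρ z' ↔ ∃ h, σ z = T.rng h ∧ z' = actR z h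
  σ_fiber_orbit : ∀ z z', σ z = σ z' ↔ ∃ g, S.src g = ρ z ∧ z' = actL g z
  ρ_surj : Set.range ρ = S.units
  σ_surj : Set.range σ = T.units
  quotient_ρ : Topology.IsQuotientMap (fun z => (⟨ρ z, ρ_unit z⟩ : S.units))
  quotient_σ : Topology.IsQuotientMap (fun z => (⟨σ z, σ_unit z⟩ : T.units))

/-- `G` and `H` are groupoid equivalent if there exists a `G`–`H` equivalence. -/
def GroupoidEquivalent [TopologicalSpace G] [TopologicalSpace H]
    (S : GroupoidStruct G) (T : GroupoidStruct H) : Prop :=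
  ∃ (Z : Type (max u v)) (_ : TopologicalSpace Z), Nonempty (GroupoidEquivalenceData S T Z)

/-- Kakutani equivalence of ample groupoids: there are full clopen subsets `X ⊆ G⁰`, `Y ⊆ H⁰`
with `G|_X ≅ H|_Y`. -/
def KakutaniEquivalent [TopologicalSpace G] [TopologicalSpace H]
    (S : GroupoidStruct G) (T : GroupoidStruct H) : Prop :=
  ∃ (X : Set G) (Y : Set H), S.IsUnitClopen X ∧ S.IsFull X ∧ T.IsUnitClopen Y ∧ T.IsFull Y ∧
    Nonempty (GroupoidIso (S.restrict X) (T.restrict Y))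

end GroupoidStruct


namespace GXEquiv

open GroupoidStruct Topology

variable {G : Type u} [TopologicalSpace G]

/-- The space `GX = s⁻¹(X)`. -/
abbrev Z (S : GroupoidStruct G) (X : Set G) : Type u := {z : G // S.src z ∈ X}

open Classical in
noncomputable def actL (S : GroupoidStruct G) (X : Set G) (g : G) (z : Z S X) : Z S X :=
  if h : S.src g = S.rng z.1 then ⟨S.mul g z.1, by rw [S.src_mul _ _ h]; exact z.2⟩ else z

noncomputable def actR (S : GroupoidStruct G) (X : Set G) (z : Z S X) (h : S.Restrict X) :
    Z S X :=
  open Classical in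
  if hc : S.src z.1 = S.rng h.1 then
    ⟨S.mul z.1 h.1, by rw [S.src_mul _ _ hc]; exact h.2.2⟩ else z

def σmap (S : GroupoidStruct G) (X : Set G) (z : Z S X) : S.Restrict X :=
  ⟨S.src z.1, by rw [S.rng_src]; exact z.2, by rw [S.src_src]; exact z.2⟩

variable {S : GroupoidStruct G} {X : Set G}

lemma actL_val {g : G} {z : Z S X} (h : S.src g = S.rng z.1) :
    (actL S X g z).1 = S.mul g z.1 := by unfold actL; rw [dif_pos h]

lemma actR_val {z : Z S X} {h : S.Restrict X} (hc : S.src z.1 = S.rng h.1) :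
    (actR S X z h).1 = S.mul z.1 h.1 := by unfold actR; rw [dif_pos hc]

lemma continuous_rng (hS : S.IsAmple) : Continuous S.rng :=
  continuous_subtype_val.comp hS.isLocalHomeomorph_rngMap.continuous

lemma continuous_src (hS : S.IsAmple) : Continuous S.src :=
  continuous_subtype_val.comp hS.isLocalHomeomorph_srcMap.continuous

lemma continuous_mul_of (hS : S.IsAmple) {Y : Type*} [TopologicalSpace Y]
    {f g : Y → G} (hf : Continuous f) (hg : Continuous g)
    (h : ∀ y, S.src (f y) = S.rng (g y)) : Continuous (fun y => S.mul (f y) (g y)) :=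
  hS.toIsTopologicalGroupoid.continuousOn_mul.comp_continuous (hf.prodMk hg) h

noncomputable def data (S : GroupoidStruct G) (X : Set G) (hS : S.IsAmple)
    (hX : S.IsUnitOpen X) (hXf : S.IsFull X) :
    GroupoidEquivalenceData S (S.restrict X) (Z S X) where
  ρ z := S.rng z.1
  σ := σmap S X
  ρ_unit z := ⟨S.src_rng _, S.rng_rng _⟩
  σ_unit z := ⟨Subtype.ext (S.src_src z.1), Subtype.ext (S.rng_src z.1)⟩
  continuous_ρ := (continuous_rng hS).comp continuous_subtype_val
  continuous_σ := (((continuous_src hS).comp continuous_subtype_val)).subtype_mk _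
  actL := actL S X
  actR := actR S X
  ρ_actL g z h := by
    show S.rng (actL S X g z).1 = S.rng g
    rw [actL_val h, S.rng_mul _ _ h]
  σ_actL g z h := Subtype.ext (by show S.src _ = S.src z.1; rw [actL_val h, S.src_mul _ _ h])
  actL_unit z := Subtype.ext (by
    show (actL S X (S.rng z.1) z).1 = z.1
    rw [actL_val (S.src_rng z.1)]; exact S.rng_mul_self z.1)
  actL_mul g g' z h1 h2 := by
    have hcond : S.src (S.mul g g') = S.rng z.1 := by rw [S.src_mul _ _ h1]; exact h2
    have hgr : S.src g = S.rng (actL S X g' z).1 := by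
      rw [actL_val h2, S.rng_mul _ _ h2]; exact h1
    apply Subtype.ext
    rw [actL_val hcond, actL_val hgr, actL_val h2, S.mul_assoc _ _ _ h1 h2]
  σ_actR z h hc := by
    have hc' : S.src z.1 = S.rng h.1 := congrArg Subtype.val hc
    exact Subtype.ext (by show S.src _ = S.src h.1; rw [actR_val hc', S.src_mul _ _ hc'])
  ρ_actR z h hc := by
    have hc' : S.src z.1 = S.rng h.1 := congrArg Subtype.val hc
    show S.rng _ = S.rng z.1
    rw [actR_val hc', S.rng_mul _ _ hc']
  actR_unit z := Subtype.ext (by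
    rw [actR_val (S.rng_src z.1).symm]; exact S.mul_src z.1)
  actR_mul z h h' hc1 hc2 := by
    have hc1' : S.src z.1 = S.rng h.1 := congrArg Subtype.val hc1
    have hc2' : S.src h.1 = S.rng h'.1 := congrArg Subtype.val hc2
    have hL : S.src (actR S X z h).1 = S.rng h'.1 := by
      rw [actR_val hc1', S.src_mul _ _ hc1']; exact hc2'
    have hval : ((S.restrict X).mul h h').1 = S.mul h.1 h'.1 := S.rmul_val X h h' hc2'
    have hR : S.src z.1 = S.rng ((S.restrict X).mul h h').1 := by
      rw [hval, S.rng_mul _ _ hc2']; exact hc1'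
    apply Subtype.ext
    rw [actR_val hL, actR_val hc1', actR_val hR, hval,
      S.mul_assoc _ _ _ hc1' hc2']
  act_comm g z h hg hh := by
    have hh' : S.src z.1 = S.rng h.1 := congrArg Subtype.val hh
    have h1 : S.src g = S.rng (actR S X z h).1 := by
      rw [actR_val hh', S.rng_mul _ _ hh']; exact hg
    have h2 : S.src (actL S X g z).1 = S.rng h.1 := by
      rw [actL_val hg, S.src_mul _ _ hg]; exact hh'
    apply Subtype.ext
    rw [actL_val h1, actR_val hh', actR_val h2, actL_val hg,
      ← S.mul_assoc _ _ _ hg hh']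
  continuousOn_actL := by
    rw [continuousOn_iff_continuous_restrict]
    have h1 : Continuous (fun q : {p : G × Z S X | S.src p.1 = S.rng p.2.1} =>
        S.mul q.1.1 q.1.2.1) :=
      continuous_mul_of hS (continuous_fst.comp continuous_subtype_val)
        (continuous_subtype_val.comp (continuous_snd.comp continuous_subtype_val))
        (fun q => q.2)
    have h2 : Continuous (fun q : {p : G × Z S X | S.src p.1 = S.rng p.2.1} =>
        (⟨S.mul q.1.1 q.1.2.1, by rw [S.src_mul _ _ q.2]; exact q.1.2.2⟩ : Z S X)) :=
      h1.subtype_mk _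
    exact h2.congr fun q => Subtype.ext (actL_val q.2).symm
  continuousOn_actR := by
    rw [continuousOn_iff_continuous_restrict]
    have hmem : ∀ q : {p : Z S X × S.Restrict X | σmap S X p.1 = (S.restrict X).rng p.2},
        S.src q.1.1.1 = S.rng q.1.2.1 := fun q => congrArg Subtype.val q.2
    have h1 : Continuous (fun q : {p : Z S X × S.Restrict X |
        σmap S X p.1 = (S.restrict X).rng p.2} => S.mul q.1.1.1 q.1.2.1) :=
      continuous_mul_of hS
        (continuous_subtype_val.comp (continuous_fst.comp continuous_subtype_val))
        (continuous_subtype_val.comp (continuous_snd.comp continuous_subtype_val))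
        hmem
    have h2 : Continuous (fun q : {p : Z S X × S.Restrict X |
        σmap S X p.1 = (S.restrict X).rng p.2} =>
        (⟨S.mul q.1.1.1 q.1.2.1, by rw [S.src_mul _ _ (hmem q)]; exact q.1.2.2.2⟩ : Z S X)) :=
      h1.subtype_mk _
    exact h2.congr fun q => Subtype.ext (actR_val (hmem q)).symm
  free_actL g z h heq := by
    have heq' : S.mul g z.1 = z.1 := by rw [← actL_val h]; exact congrArg Subtype.val heq
    calc g = S.mul g (S.src g) := (S.mul_src g).symm
      _ = S.mul g (S.mul z.1 (S.inv z.1)) := by rw [h, S.mul_inv]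
      _ = S.mul (S.mul g z.1) (S.inv z.1) := (S.mul_assoc _ _ _ h (S.rng_inv z.1).symm).symm
      _ = S.mul z.1 (S.inv z.1) := by rw [heq']
      _ = S.rng z.1 := S.mul_inv z.1
  free_actR z h hc heq := by
    have hc' : S.src z.1 = S.rng h.1 := congrArg Subtype.val hc
    have heq' : S.mul z.1 h.1 = z.1 := by rw [← actR_val hc']; exact congrArg Subtype.val heq
    apply Subtype.ext
    show h.1 = S.src z.1
    calc h.1 = S.mul (S.rng h.1) h.1 := (S.rng_mul_self h.1).symm
      _ = S.mul (S.mul (S.inv z.1) z.1) h.1 := by rw [← hc', S.inv_mul]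
      _ = S.mul (S.inv z.1) (S.mul z.1 h.1) := S.mul_assoc _ _ _ (S.src_inv z.1) hc'
      _ = S.mul (S.inv z.1) z.1 := by rw [heq']
      _ = S.src z.1 := S.inv_mul z.1
  proper_actL := by
    haveI : T2Space S.units := hS.t2_units
    have hCL : IsClosed {p : Z S X × Z S X | S.src p.1.1 = S.src p.2.1} := by
      have heq : {p : Z S X × Z S X | S.src p.1.1 = S.src p.2.1} =
          {p : Z S X × Z S X | S.srcMap p.1.1 = S.srcMap p.2.1} :=
        Set.ext fun p => ⟨fun hp => Subtype.ext hp, fun hp => congrArg Subtype.val hp⟩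
      rw [heq]
      exact isClosed_eq
        (hS.isLocalHomeomorph_srcMap.continuous.comp
          (continuous_subtype_val.comp continuous_fst))
        (hS.isLocalHomeomorph_srcMap.continuous.comp
          (continuous_subtype_val.comp continuous_snd))
    let e : {q : G × Z S X // S.src q.1 = S.rng q.2.1} ≃ₜ
        {p : Z S X × Z S X | S.src p.1.1 = S.src p.2.1} :=
      { toFun := fun p => ⟨((⟨S.mul p.1.1 p.1.2.1,
            by rw [S.src_mul _ _ p.2]; exact p.1.2.2⟩ : Z S X), p.1.2),
          by show S.src (S.mul p.1.1 p.1.2.1) = S.src p.1.2.1; rw [S.src_mul _ _ p.2]⟩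
        invFun := fun c => ⟨(S.mul c.1.1.1 (S.inv c.1.2.1), c.1.2), by
          show S.src (S.mul c.1.1.1 (S.inv c.1.2.1)) = S.rng c.1.2.1
          rw [S.src_mul _ _ (by rw [S.rng_inv]; exact c.2), S.src_inv]⟩
        left_inv := fun p => by
          apply Subtype.ext
          refine Prod.ext_iff.mpr ⟨?_, rfl⟩
          show S.mul (S.mul p.1.1 p.1.2.1) (S.inv p.1.2.1) = p.1.1
          rw [S.mul_assoc _ _ _ p.2 (S.rng_inv p.1.2.1).symm, S.mul_inv, ← p.2, S.mul_src]
        right_inv := fun c => by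
          apply Subtype.ext
          refine Prod.ext_iff.mpr ⟨Subtype.ext ?_, rfl⟩
          show S.mul (S.mul c.1.1.1 (S.inv c.1.2.1)) c.1.2.1 = c.1.1.1
          rw [S.mul_assoc _ _ _ (by rw [S.rng_inv]; exact c.2) (S.src_inv c.1.2.1),
            S.inv_mul, ← c.2, S.mul_src]
        continuous_toFun := by
          apply Continuous.subtype_mk
          refine Continuous.prodMk (Continuous.subtype_mk ?_ _)
            (continuous_snd.comp continuous_subtype_val)
          exact continuous_mul_of hS (continuous_fst.comp continuous_subtype_val)
            (continuous_subtype_val.comp (continuous_snd.comp continuous_subtype_val))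
            (fun p => p.2)
        continuous_invFun := by
          apply Continuous.subtype_mk
          refine Continuous.prodMk ?_
            (continuous_snd.comp continuous_subtype_val)
          refine continuous_mul_of hS
            (continuous_subtype_val.comp (continuous_fst.comp continuous_subtype_val))
            (hS.continuous_inv.comp (continuous_subtype_val.comp
              (continuous_snd.comp continuous_subtype_val)))
            (fun c => by rw [S.rng_inv]; exact c.2) }
    have hFeq : (fun p : {q : G × Z S X // S.src q.1 = S.rng q.2.1} =>
        ((actL S X p.1.1 p.1.2, p.1.2) : Z S X × Z S X)) = Subtype.val ∘ e :=
      funext fun p => Prod.ext_iff.mpr ⟨Subtype.ext (actL_val p.2), rfl⟩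
    have hprop := (hCL.isClosedEmbedding_subtypeVal.comp e.isClosedEmbedding).isProperMap
    rw [← hFeq] at hprop
    exact hprop
  proper_actR := by
    haveI : T2Space S.units := hS.t2_units
    have hCR : IsClosed {p : Z S X × Z S X | S.rng p.1.1 = S.rng p.2.1} := by
      have heq : {p : Z S X × Z S X | S.rng p.1.1 = S.rng p.2.1} =
          {p : Z S X × Z S X | S.rngMap p.1.1 = S.rngMap p.2.1} :=
        Set.ext fun p => ⟨fun hp => Subtype.ext hp, fun hp => congrArg Subtype.val hp⟩
      rw [heq]
      exact isClosed_eq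
        (hS.isLocalHomeomorph_rngMap.continuous.comp
          (continuous_subtype_val.comp continuous_fst))
        (hS.isLocalHomeomorph_rngMap.continuous.comp
          (continuous_subtype_val.comp continuous_snd))
    have hmem : ∀ q : {q : Z S X × S.Restrict X // σmap S X q.1 = (S.restrict X).rng q.2},
        S.src q.1.1.1 = S.rng q.1.2.1 := fun q => congrArg Subtype.val q.2
    let e : {q : Z S X × S.Restrict X // σmap S X q.1 = (S.restrict X).rng q.2} ≃ₜ
        {p : Z S X × Z S X | S.rng p.1.1 = S.rng p.2.1} :=
      { toFun := fun q => ⟨((⟨S.mul q.1.1.1 q.1.2.1,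
            by rw [S.src_mul _ _ (hmem q)]; exact q.1.2.2.2⟩ : Z S X), q.1.1),
          by show S.rng (S.mul q.1.1.1 q.1.2.1) = S.rng q.1.1.1
             exact S.rng_mul _ _ (hmem q)⟩
        invFun := fun c => ⟨(c.1.2, ⟨S.mul (S.inv c.1.2.1) c.1.1.1,
            by rw [S.rng_mul _ _ (by rw [S.src_inv]; exact c.2.symm), S.rng_inv]
               exact c.1.2.2,
            by rw [S.src_mul _ _ (by rw [S.src_inv]; exact c.2.symm)]; exact c.1.1.2⟩),
          Subtype.ext (by
            show S.src c.1.2.1 = S.rng (S.mul (S.inv c.1.2.1) c.1.1.1)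
            rw [S.rng_mul _ _ (by rw [S.src_inv]; exact c.2.symm), S.rng_inv])⟩
        left_inv := fun q => by
          apply Subtype.ext
          refine Prod.ext_iff.mpr ⟨rfl, Subtype.ext ?_⟩
          show S.mul (S.inv q.1.1.1) (S.mul q.1.1.1 q.1.2.1) = q.1.2.1
          rw [← S.mul_assoc _ _ _ (S.src_inv q.1.1.1) (hmem q), S.inv_mul, hmem q,
            S.rng_mul_self]
        right_inv := fun c => by
          apply Subtype.ext
          refine Prod.ext_iff.mpr ⟨Subtype.ext ?_, rfl⟩
          show S.mul c.1.2.1 (S.mul (S.inv c.1.2.1) c.1.1.1) = c.1.1.1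
          rw [← S.mul_assoc _ _ _ (S.rng_inv c.1.2.1).symm
            (by rw [S.src_inv]; exact c.2.symm), S.mul_inv, ← c.2, S.rng_mul_self]
        continuous_toFun := by
          apply Continuous.subtype_mk
          refine Continuous.prodMk (Continuous.subtype_mk ?_ _)
            (continuous_fst.comp continuous_subtype_val)
          exact continuous_mul_of hS
            (continuous_subtype_val.comp (continuous_fst.comp continuous_subtype_val))
            (continuous_subtype_val.comp (continuous_snd.comp continuous_subtype_val))
            hmem
        continuous_invFun := by
          apply Continuous.subtype_mk
          refine Continuous.prodMk
            (continuous_snd.comp continuous_subtype_val) ?_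
          apply Continuous.subtype_mk
          refine continuous_mul_of hS
            (hS.continuous_inv.comp (continuous_subtype_val.comp
              (continuous_snd.comp continuous_subtype_val)))
            (continuous_subtype_val.comp (continuous_fst.comp continuous_subtype_val))
            (fun c => by rw [S.src_inv]; exact c.2.symm) }
    have hFeq : (fun q : {q : Z S X × S.Restrict X //
        σmap S X q.1 = (S.restrict X).rng q.2} =>
        ((actR S X q.1.1 q.1.2, q.1.1) : Z S X × Z S X)) = Subtype.val ∘ e :=
      funext fun q => Prod.ext_iff.mpr ⟨Subtype.ext (actR_val (hmem q)), rfl⟩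
    have hprop := (hCR.isClosedEmbedding_subtypeVal.comp e.isClosedEmbedding).isProperMap
    rw [← hFeq] at hprop
    exact hprop
  ρ_fiber_orbit z z' := by
    constructor
    · intro hrr
      have hrr' : S.rng z.1 = S.rng z'.1 := hrr
      have hc : S.src (S.inv z.1) = S.rng z'.1 := by rw [S.src_inv]; exact hrr'
      refine ⟨⟨S.mul (S.inv z.1) z'.1,
        by rw [S.rng_mul _ _ hc, S.rng_inv]; exact z.2,
        by rw [S.src_mul _ _ hc]; exact z'.2⟩,
        Subtype.ext (by show S.src z.1 = S.rng (S.mul (S.inv z.1) z'.1)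
                        rw [S.rng_mul _ _ hc, S.rng_inv]), ?_⟩
      have hcond : S.src z.1 = S.rng (S.mul (S.inv z.1) z'.1) := by
        rw [S.rng_mul _ _ hc, S.rng_inv]
      apply Subtype.ext
      rw [actR_val hcond, ← S.mul_assoc _ _ _ (S.rng_inv z.1).symm hc, S.mul_inv, hrr',
        S.rng_mul_self]
    · rintro ⟨h, hc, rfl⟩
      have hc' : S.src z.1 = S.rng h.1 := congrArg Subtype.val hc
      show S.rng z.1 = S.rng (actR S X z h).1
      rw [actR_val hc', S.rng_mul _ _ hc']
  σ_fiber_orbit z z' := by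
    constructor
    · intro hss
      have hss' : S.src z.1 = S.src z'.1 := congrArg Subtype.val hss
      have hc : S.src z'.1 = S.rng (S.inv z.1) := by rw [S.rng_inv]; exact hss'.symm
      have hg : S.src (S.mul z'.1 (S.inv z.1)) = S.rng z.1 := by
        rw [S.src_mul _ _ hc, S.src_inv]
      refine ⟨S.mul z'.1 (S.inv z.1), hg, ?_⟩
      apply Subtype.ext
      rw [actL_val hg, S.mul_assoc _ _ _ hc (S.src_inv z.1), S.inv_mul, hss', S.mul_src]
    · rintro ⟨g, hg, rfl⟩
      apply Subtype.ext
      show S.src z.1 = S.src (actL S X g z).1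
      rw [actL_val hg, S.src_mul _ _ hg]
  ρ_surj := by
    ext u
    constructor
    · rintro ⟨z, rfl⟩
      exact ⟨S.src_rng _, S.rng_rng _⟩
    · intro hu
      have hu' : u ∈ S.rng '' (S.src ⁻¹' X) := by rw [hXf]; exact hu
      obtain ⟨g, hg, hgu⟩ := hu'
      exact ⟨⟨g, hg⟩, hgu⟩
  σ_surj := by
    ext u
    constructor
    · rintro ⟨z, rfl⟩
      exact ⟨Subtype.ext (S.src_src z.1), Subtype.ext (S.rng_src z.1)⟩
    · intro hu
      have h1 : S.src u.1 = u.1 := congrArg Subtype.val hu.1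
      exact ⟨⟨u.1, u.2.2⟩, Subtype.ext h1⟩
  quotient_ρ := by
    have hXopen : IsOpen {g : G | S.src g ∈ X} :=
      hX.2.preimage hS.isLocalHomeomorph_srcMap.continuous
    refine IsOpenMap.isQuotientMap ?_ ?_ ?_
    · exact hS.isLocalHomeomorph_rngMap.isOpenMap.comp hXopen.isOpenMap_subtype_val
    · exact hS.isLocalHomeomorph_rngMap.continuous.comp continuous_subtype_val
    · intro u
      have hu' : (u : G) ∈ S.rng '' (S.src ⁻¹' X) := by rw [hXf]; exact u.2
      obtain ⟨g, hg, hgu⟩ := hu'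
      exact ⟨⟨g, hg⟩, Subtype.ext hgu⟩
  quotient_σ := by
    have hXopen : IsOpen {g : G | S.src g ∈ X} :=
      hX.2.preimage hS.isLocalHomeomorph_srcMap.continuous
    refine IsOpenMap.isQuotientMap ?_ ?_ ?_
    · intro U hU
      have hop : IsOpenMap (fun z : Z S X => S.srcMap z.1) :=
        hS.isLocalHomeomorph_srcMap.isOpenMap.comp hXopen.isOpenMap_subtype_val
      have h1 : IsOpen ((fun z : Z S X => S.srcMap z.1) '' U) := hop U hU
      obtain ⟨W, hW, hWeq⟩ := (Topology.IsInducing.subtypeVal.isOpen_iff).mp h1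
      have hind : IsInducing (fun t : (S.restrict X).units => (t.1.1 : G)) :=
        Topology.IsInducing.subtypeVal.comp Topology.IsInducing.subtypeVal
      rw [hind.isOpen_iff]
      refine ⟨W, hW, ?_⟩
      ext t
      constructor
      · intro ht
        have htu : t.1.1 ∈ S.units :=
          ⟨congrArg Subtype.val t.2.1, congrArg Subtype.val t.2.2⟩
        have hmem : (⟨t.1.1, htu⟩ : S.units) ∈ Subtype.val ⁻¹' W := ht
        rw [hWeq] at hmem
        obtain ⟨z, hzU, hz⟩ := hmem
        refine ⟨z, hzU, ?_⟩
        have hz' : S.src z.1 = t.1.1 := congrArg Subtype.val hz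
        exact Subtype.ext (Subtype.ext hz')
      · rintro ⟨z, hzU, rfl⟩
        have hmem : S.srcMap z.1 ∈ Subtype.val ⁻¹' W := by
          rw [hWeq]; exact ⟨z, hzU, rfl⟩
        exact hmem
    · exact Continuous.subtype_mk
        (((continuous_src hS).comp continuous_subtype_val).subtype_mk _) _
    · intro u
      have h1 : S.src u.1.1 = u.1.1 := congrArg Subtype.val u.2.1
      exact ⟨⟨u.1.1, u.1.2.2⟩, Subtype.ext (Subtype.ext h1)⟩

end GXEquiv

open GroupoidStruct in
/-- For an ample groupoid `G` and a `G`-full open `X ⊆ G⁰`, the space `GX = s⁻¹(X)`, with `G`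
acting on the left and `G|_X` on the right by multiplication and anchor maps the restrictions
of `r` and `s`, is a `G`–`G|_X` equivalence; consequently `G` and `G|_X` are groupoid
equivalent. -/
theorem gx_is_equivalence
    {G : Type u} [TopologicalSpace G] (S : GroupoidStruct G) (hS : S.IsAmple)
    {X : Set G} (hX : S.IsUnitOpen X) (hXf : S.IsFull X) :
    (∃ E : GroupoidEquivalenceData S (S.restrict X) {z : G // S.src z ∈ X},
      (∀ z, E.ρ z = S.rng z.1) ∧
      (∀ z, (E.σ z).1 = S.src z.1) ∧
      (∀ g z, S.src g = E.ρ z → (E.actL g z).1 = S.mul g z.1) ∧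
      (∀ z h, E.σ z = (S.restrict X).rng h → (E.actR z h).1 = S.mul z.1 h.1)) ∧
    GroupoidEquivalent S (S.restrict X) := by
  classical
  refine ⟨⟨GXEquiv.data S X hS hX hXf, fun z => rfl, fun z => rfl,
    fun g z h => GXEquiv.actL_val h, fun z h hc => GXEquiv.actR_val (congrArg Subtype.val hc)⟩,
    ⟨{z : G // S.src z ∈ X}, inferInstance, ⟨GXEquiv.data S X hS hX hXf⟩⟩⟩
end

section
/- Let E be a directed graph. For v ∈ E⁰ write μ_{0,v} := v and, for i ≥ 1, μ_{i,v} := f_{i,v} f_{i−1,v} ⋯ f_{1,v} in SE. Then ∂(SE) = {μ_{i,s(x)} x : x ∈ ∂E, i ∈ ℕ}, every element of ∂(SE) has a unique such representation, and the map μ_{i,s(x)} x ↦ (x, i) is a homeomorphism from ∂(SE) onto ∂E × ℕ, where ℕ carries the discrete topology. -/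
universe u v w

/-! ### Directed graphs, boundary path spaces and graph groupoids -/

/-- A directed graph: vertices, edges, and source/range maps.  We use the convention that a
path `e₁e₂⋯eₙ` satisfies `r(eᵢ) = s(eᵢ₊₁)`. -/
structure DirGraph : Type (u + 1) where
  V : Type u
  E : Type u
  s : E → V
  r : E → V

namespace DirGraph

/-- `IsPathList Γ v l w`: the list of edges `l` forms a path from `v` to `w`. -/
inductive IsPathList (Γ : DirGraph) : Γ.V → List Γ.E → Γ.V → Prop
  | nil (v : Γ.V) : IsPathList Γ v [] v
  | cons {v w : Γ.V} (e : Γ.E) {l : List Γ.E} (hv : Γ.s e = v)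
      (h : IsPathList Γ (Γ.r e) l w) : IsPathList Γ v (e :: l) w

lemma isPathList_cons_tail {Γ : DirGraph} {v w : Γ.V} {e : Γ.E} {l : List Γ.E}
    (h : Γ.IsPathList v (e :: l) w) : Γ.IsPathList (Γ.r e) l w := by
  cases h; assumption

/-- A finite path in a directed graph. -/
structure FinPath (Γ : DirGraph) where
  src : Γ.V
  edges : List Γ.E
  rng : Γ.V
  isPath : Γ.IsPathList src edges rng

/-- An infinite path in a directed graph. -/
structure InfPath (Γ : DirGraph) where
  edges : ℕ → Γ.E
  compat : ∀ n, Γ.r (edges n) = Γ.s (edges (n + 1))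

/-- A sink: a vertex emitting no edges. -/
def IsSink (Γ : DirGraph) (v : Γ.V) : Prop := ∀ e, Γ.s e ≠ v

/-- An infinite emitter: a vertex emitting infinitely many edges. -/
def IsInfiniteEmitter (Γ : DirGraph) (v : Γ.V) : Prop := {e | Γ.s e = v}.Infinite

def IsBoundaryVertex (Γ : DirGraph) (v : Γ.V) : Prop :=
  Γ.IsSink v ∨ Γ.IsInfiniteEmitter v

/-- The boundary path space `∂E`: all infinite paths together with all finite paths whose
range is a sink or an infinite emitter. -/
inductive BPath (Γ : DirGraph) : Type u
  | fin (p : Γ.FinPath) (hb : Γ.IsBoundaryVertex p.rng) : BPath Γ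
  | inf (x : Γ.InfPath) : BPath Γ

variable {Γ : DirGraph}

namespace BPath

/-- The source (initial vertex) of a boundary path. -/
def src : Γ.BPath → Γ.V
  | .fin p _ => p.src
  | .inf x => Γ.s (x.edges 0)

/-- The length of a boundary path, in `ℕ∞`. -/
def length : Γ.BPath → ℕ∞
  | .fin p _ => (p.edges.length : ℕ∞)
  | .inf _ => ⊤

/-- The `n`-th edge of a boundary path, if defined. -/
def edge? : Γ.BPath → ℕ → Option Γ.E
  | .fin p _, n => p.edges[n]?
  | .inf x, n => some (x.edges n)

/-- Remove the first edge of a boundary path (identity on paths of length zero). -/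
def tail : Γ.BPath → Γ.BPath
  | .fin ⟨v, [], w, h⟩ hb => .fin ⟨v, [], w, h⟩ hb
  | .fin ⟨_, e :: l, w, h⟩ hb => .fin ⟨Γ.r e, l, w, isPathList_cons_tail h⟩ hb
  | .inf x => .inf ⟨fun n => x.edges (n + 1), fun n => x.compat (n + 1)⟩

/-- The shift map `σⁿ`, removing the first `n` edges. -/
def shift (n : ℕ) (x : Γ.BPath) : Γ.BPath := tail^[n] x

/-- Prepend an edge to a boundary path. -/
def cons (e : Γ.E) : (x : Γ.BPath) → x.src = Γ.r e → Γ.BPath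
  | .fin p hb, h => .fin ⟨Γ.s e, e :: p.edges, p.rng, .cons e rfl (h ▸ p.isPath)⟩ hb
  | .inf x, h => .inf ⟨fun n => Nat.casesOn n e fun k => x.edges k,
      fun n => by
        cases n with
        | zero => exact h.symm
        | succ k => exact x.compat k⟩

open Classical in
/-- Prepend an edge to a boundary path when composable; otherwise do nothing. -/
noncomputable def consE (e : Γ.E) (x : Γ.BPath) : Γ.BPath :=
  if h : x.src = Γ.r e then x.cons e h else x

/-- Concatenation `μx` of a finite path `μ` with a boundary path `x` (extending by junk when
the paths are not composable). -/
noncomputable def concat (μ : Γ.FinPath) (x : Γ.BPath) : Γ.BPath :=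
  μ.edges.foldr consE x

/-- `x` has the finite path `μ` as an initial segment. -/
def hasPrefix (x : Γ.BPath) (μ : Γ.FinPath) : Prop :=
  x.src = μ.src ∧ ∀ n < μ.edges.length, x.edge? n = μ.edges[n]?

/-- The cylinder set `Z(μ ∖ F)`. -/
def cyl (μ : Γ.FinPath) (F : Finset Γ.E) : Set Γ.BPath :=
  {x | x.hasPrefix μ ∧ ∀ e ∈ F, x.edge? μ.edges.length ≠ some e}

/-- The topology on the boundary path space, generated by the cylinder sets `Z(μ ∖ F)`. -/
instance : TopologicalSpace Γ.BPath :=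
  TopologicalSpace.generateFrom
    {U | ∃ (μ : Γ.FinPath) (F : Finset Γ.E), (∀ e ∈ F, Γ.s e = μ.rng) ∧ U = cyl μ F}

lemma length_tail (x : Γ.BPath) : x.tail.length = x.length - 1 := by
  cases x with
  | fin p hb =>
    cases p with
    | mk v l w hp =>
      cases l with
      | nil => simp [tail, length, zero_tsub]
      | cons e l' =>
        simp only [tail, length, List.length_cons]
        rw [← Nat.cast_one (R := ℕ∞), ← ENat.coe_sub]
        norm_num
  | inf x => simp [tail, length]

lemma length_shift (n : ℕ) (x : Γ.BPath) : (shift n x).length = x.length - n := by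
  induction n generalizing x with
  | zero => simp [shift]
  | succ k ih =>
    have hs : shift (k + 1) x = tail (shift k x) := Function.iterate_succ_apply' tail k x
    rw [hs, length_tail, ih, tsub_tsub]
    norm_cast

lemma shift_shift (m n : ℕ) (x : Γ.BPath) : shift m (shift n x) = shift (n + m) x := by
  simp only [shift, ← Function.iterate_add_apply]
  rw [Nat.add_comm]

end BPath

lemma enat_add_le {a c : ℕ} {t : ℕ∞} (h1 : (a : ℕ∞) ≤ t) (h2 : (c : ℕ∞) ≤ t - a) :
    ((a + c : ℕ) : ℕ∞) ≤ t := by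
  induction t using ENat.recTopCoe with
  | top => exact le_top
  | coe N =>
    rw [← ENat.coe_sub] at h2
    rw [Nat.cast_le] at h1 h2 ⊢
    omega

/-- The arrow space of the graph groupoid `G_E`. -/
def GraphGpd (Γ : DirGraph) : Type u :=
  {t : Γ.BPath × ℤ × Γ.BPath // ∃ m n : ℕ,
    (m : ℤ) - (n : ℤ) = t.2.1 ∧ (m : ℕ∞) ≤ t.1.length ∧ (n : ℕ∞) ≤ t.2.2.length ∧
    BPath.shift m t.1 = BPath.shift n t.2.2}

/-- The vertex path at a vertex `v`. -/
def FinPath.ofVertex (Γ : DirGraph) (v : Γ.V) : Γ.FinPath := ⟨v, [], v, .nil v⟩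

/-- The topology on the graph groupoid, generated by the basic sets `Z(α, β ∖ F)`. -/
instance (Γ : DirGraph) : TopologicalSpace Γ.GraphGpd :=
  TopologicalSpace.generateFrom
    {U | ∃ (α β : Γ.FinPath) (F : Finset Γ.E), α.rng = β.rng ∧ (∀ e ∈ F, Γ.s e = α.rng) ∧
      U = {t : Γ.GraphGpd | ∃ x : Γ.BPath,
        x ∈ BPath.cyl (FinPath.ofVertex Γ α.rng) F ∧
        t.1 = (BPath.concat α x, (α.edges.length : ℤ) - (β.edges.length : ℤ),
          BPath.concat β x)}}

def gsrc (t : Γ.GraphGpd) : Γ.GraphGpd :=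
  ⟨(t.1.2.2, 0, t.1.2.2), 0, 0, by simp, by simp, by simp, rfl⟩

def grng (t : Γ.GraphGpd) : Γ.GraphGpd :=
  ⟨(t.1.1, 0, t.1.1), 0, 0, by simp, by simp, by simp, rfl⟩

def ginv (t : Γ.GraphGpd) : Γ.GraphGpd :=
  ⟨(t.1.2.2, -t.1.2.1, t.1.1), by
    obtain ⟨m, n, he, hl1, hl2, hs⟩ := t.2
    refine ⟨n, m, ?_, hl2, hl1, hs.symm⟩
    show (n : ℤ) - (m : ℤ) = -t.1.2.1
    omega⟩

open Classical in
noncomputable def gmul (t u : Γ.GraphGpd) : Γ.GraphGpd :=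
  if h : t.1.2.2 = u.1.1 then
    ⟨(t.1.1, t.1.2.1 + u.1.2.1, u.1.2.2), by
      obtain ⟨m1, n1, e1, l1, l1', s1⟩ := t.2
      obtain ⟨m2, n2, e2, l2, l2', s2⟩ := u.2
      rw [h] at l1' s1
      have hlen : t.1.1.length - m1 = u.1.1.length - n1 := by
        have := congrArg BPath.length s1
        rwa [BPath.length_shift, BPath.length_shift] at this
      refine ⟨m1 + (m2 - n1), n2 + (n1 - m2), ?_, ?_, ?_, ?_⟩
      · show ((m1 + (m2 - n1) : ℕ) : ℤ) - ((n2 + (n1 - m2) : ℕ) : ℤ) = t.1.2.1 + u.1.2.1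
        omega
      · refine enat_add_le l1 ?_
        rw [hlen, ENat.coe_sub]
        exact tsub_le_tsub_right l2 _
      · refine enat_add_le l2' ?_
        have hlen2 : u.1.1.length - m2 = u.1.2.2.length - n2 := by
          have := congrArg BPath.length s2
          rwa [BPath.length_shift, BPath.length_shift] at this
        rw [← hlen2, ENat.coe_sub]
        exact tsub_le_tsub_right l1' _
      · have key : n1 + (m2 - n1) = m2 + (n1 - m2) := by omega
        calc BPath.shift (m1 + (m2 - n1)) t.1.1
            = BPath.shift (m2 - n1) (BPath.shift m1 t.1.1) := (BPath.shift_shift _ _ _).symm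
          _ = BPath.shift (m2 - n1) (BPath.shift n1 u.1.1) := by rw [s1]
          _ = BPath.shift (n1 + (m2 - n1)) u.1.1 := BPath.shift_shift _ _ _
          _ = BPath.shift (m2 + (n1 - m2)) u.1.1 := by rw [key]
          _ = BPath.shift (n1 - m2) (BPath.shift m2 u.1.1) := (BPath.shift_shift _ _ _).symm
          _ = BPath.shift (n1 - m2) (BPath.shift n2 u.1.2.2) := by rw [s2]
          _ = BPath.shift (n2 + (n1 - m2)) u.1.2.2 := BPath.shift_shift _ _ _⟩
  else t

@[simp] lemma gsrc_val (t : Γ.GraphGpd) : (gsrc t).1 = (t.1.2.2, 0, t.1.2.2) := rfl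
@[simp] lemma grng_val (t : Γ.GraphGpd) : (grng t).1 = (t.1.1, 0, t.1.1) := rfl
@[simp] lemma ginv_val (t : Γ.GraphGpd) : (ginv t).1 = (t.1.2.2, -t.1.2.1, t.1.1) := rfl

lemma gmul_val (t u : Γ.GraphGpd) (h : t.1.2.2 = u.1.1) :
    (gmul t u).1 = (t.1.1, t.1.2.1 + u.1.2.1, u.1.2.2) := by
  unfold gmul
  exact congrArg Subtype.val (dif_pos h)

/-- The graph groupoid `G_E` of a directed graph. -/
noncomputable def graphGpd (Γ : DirGraph) : GroupoidStruct Γ.GraphGpd where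
  src := gsrc
  rng := grng
  mul := gmul
  inv := ginv
  src_src t := Subtype.ext rfl
  rng_src t := Subtype.ext rfl
  src_rng t := Subtype.ext rfl
  rng_rng t := Subtype.ext rfl
  mul_assoc t u v h1 h2 := by
    have h12 : t.1.2.2 = u.1.1 := congrArg (fun w => w.1.1) h1
    have h23 : u.1.2.2 = v.1.1 := congrArg (fun w => w.1.1) h2
    have htu := gmul_val t u h12
    have huv := gmul_val u v h23
    have hA : (gmul t u).1.2.2 = v.1.1 := by rw [htu]; exact h23
    have hB : t.1.2.2 = (gmul u v).1.1 := by rw [huv]; exact h12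
    apply Subtype.ext
    rw [gmul_val _ _ hA, gmul_val _ _ hB, htu, huv]
    simp [add_assoc]
  src_mul t u h := by
    have h' : t.1.2.2 = u.1.1 := congrArg (fun w => w.1.1) h
    apply Subtype.ext
    show ((gmul t u).1.2.2, (0 : ℤ), (gmul t u).1.2.2) = _
    rw [gmul_val _ _ h']
    rfl
  rng_mul t u h := by
    have h' : t.1.2.2 = u.1.1 := congrArg (fun w => w.1.1) h
    apply Subtype.ext
    show ((gmul t u).1.1, (0 : ℤ), (gmul t u).1.1) = _
    rw [gmul_val _ _ h']
    rfl
  mul_src t := by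
    apply Subtype.ext
    rw [gmul_val _ _ rfl]
    simp
  rng_mul_self t := by
    apply Subtype.ext
    rw [gmul_val _ _ rfl]
    simp
  src_inv t := Subtype.ext rfl
  rng_inv t := Subtype.ext rfl
  mul_inv t := by
    apply Subtype.ext
    rw [gmul_val _ _ rfl]
    simp
  inv_mul t := by
    apply Subtype.ext
    rw [gmul_val _ _ rfl]
    simp

/-! ### The stabilised graph `SE` -/

/-- The graph `SE` obtained from `E` by attaching an infinite head `⋯ f₃ f₂ f₁` at every
vertex.  The new vertex `Sum.inr (v, i)` is `vᵢ₊₁`, and the new edge `Sum.inr (v, i)` is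
`fᵢ₊₁,ᵥ`, with source `vᵢ₊₁` and range `vᵢ` (where `v₀ = v`). -/
def stab (Γ : DirGraph.{u}) : DirGraph.{u} where
  V := Γ.V ⊕ (Γ.V × ℕ)
  E := Γ.E ⊕ (Γ.V × ℕ)
  s e := match e with
    | .inl e => .inl (Γ.s e)
    | .inr (v, i) => .inr (v, i)
  r e := match e with
    | .inl e => .inl (Γ.r e)
    | .inr (v, 0) => .inl v
    | .inr (v, i + 1) => .inr (v, i)

@[simp] lemma stab_s_inl (e : Γ.E) : Γ.stab.s (Sum.inl e) = Sum.inl (Γ.s e) := rfl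
@[simp] lemma stab_s_inr (p : Γ.V × ℕ) : Γ.stab.s (Sum.inr p) = Sum.inr p := rfl
@[simp] lemma stab_r_inl (e : Γ.E) : Γ.stab.r (Sum.inl e) = Sum.inl (Γ.r e) := rfl
@[simp] lemma stab_r_inr_zero (v : Γ.V) : Γ.stab.r (Sum.inr (v, 0)) = Sum.inl v := rfl
@[simp] lemma stab_r_inr_succ (v : Γ.V) (i : ℕ) :
    Γ.stab.r (Sum.inr (v, i + 1)) = Sum.inr (v, i) := rfl

/-- The source vertex `vᵢ` of the head path `μ_{i,v}`. -/
def headSrcV (Γ : DirGraph) (v : Γ.V) : ℕ → Γ.stab.V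
  | 0 => .inl v
  | i + 1 => .inr (v, i)

/-- The edges `fᵢ,ᵥ fᵢ₋₁,ᵥ ⋯ f₁,ᵥ` of the head path `μ_{i,v}`. -/
def headEdges (Γ : DirGraph) (v : Γ.V) : ℕ → List Γ.stab.E
  | 0 => []
  | i + 1 => .inr (v, i) :: headEdges Γ v i

lemma headIsPath (Γ : DirGraph) (v : Γ.V) (i : ℕ) :
    Γ.stab.IsPathList (headSrcV Γ v i) (headEdges Γ v i) (Sum.inl v) := by
  induction i with
  | zero => exact .nil _
  | succ k ih =>
    have hr : Γ.stab.r (Sum.inr (v, k)) = headSrcV Γ v k := by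
      cases k <;> rfl
    exact .cons _ rfl (hr ▸ ih)

/-- The head path `μ_{i,v} = f_{i,v} f_{i-1,v} ⋯ f_{1,v}` from `vᵢ` to `v` in `SE`
(`μ_{0,v}` is the vertex path at `v`). -/
def headPath (Γ : DirGraph) (v : Γ.V) (i : ℕ) : Γ.stab.FinPath :=
  ⟨headSrcV Γ v i, headEdges Γ v i, Sum.inl v, headIsPath Γ v i⟩

lemma isPathList_map_inl {v w : Γ.V} {l : List Γ.E} (h : Γ.IsPathList v l w) :
    Γ.stab.IsPathList (Sum.inl v) (l.map Sum.inl) (Sum.inl w) := by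
  induction h with
  | nil v => exact .nil _
  | cons e hv h ih => exact .cons _ (congrArg Sum.inl hv) ih

lemma isSink_stab {v : Γ.V} (h : Γ.IsSink v) : Γ.stab.IsSink (Sum.inl v) := by
  intro e he
  cases e with
  | inl e' => exact h e' (Sum.inl_injective he)
  | inr p => simp at he

lemma isInfiniteEmitter_stab {v : Γ.V} (h : Γ.IsInfiniteEmitter v) :
    Γ.stab.IsInfiniteEmitter (Sum.inl v) := by
  have hsub : Sum.inl '' {e | Γ.s e = v} ⊆ {e' | Γ.stab.s e' = Sum.inl v} := by
    rintro _ ⟨e, he, rfl⟩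
    exact congrArg Sum.inl he
  exact Set.Infinite.mono hsub (h.image Sum.inl_injective.injOn)

lemma isBoundaryVertex_stab {v : Γ.V} (h : Γ.IsBoundaryVertex v) :
    Γ.stab.IsBoundaryVertex (Sum.inl v) :=
  h.elim (fun h => Or.inl (isSink_stab h)) (fun h => Or.inr (isInfiniteEmitter_stab h))

/-- A finite path of `E`, viewed as a finite path of `SE`. -/
def FinPath.toStab (p : Γ.FinPath) : Γ.stab.FinPath :=
  ⟨Sum.inl p.src, p.edges.map Sum.inl, Sum.inl p.rng, isPathList_map_inl p.isPath⟩

/-- An infinite path of `E`, viewed as an infinite path of `SE`. -/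
def InfPath.toStab (x : Γ.InfPath) : Γ.stab.InfPath :=
  ⟨fun n => Sum.inl (x.edges n), fun n => congrArg Sum.inl (x.compat n)⟩

/-- A boundary path of `E`, viewed as a boundary path of `SE`. -/
def BPath.toStab : Γ.BPath → Γ.stab.BPath
  | .fin p hb => .fin p.toStab (isBoundaryVertex_stab hb)
  | .inf x => .inf x.toStab

end DirGraph

/-!
A boundary path of `SE` starting in `E⁰` never enters a head, so it comes from a unique `x ∈ ∂E`.
One starting at a head vertex `vᵢ` must begin with `fᵢ,ᵥ`, the only edge leaving `vᵢ`; peeling off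
these forced edges writes it uniquely as `μ_{i,v} x`.

The map pulls the cylinder `Z(μ_{i,s(μ)} μ ∖ F)` back to `Z(μ ∖ F) × {i}`, and a cylinder
`Z(ν ∖ F)` with `ν` ending at a head vertex `vₖ` back to `{x | s(x) = v} × {k + |ν|}`, or to `∅`
when `f_{k,v} ∈ F`. Every cylinder of `SE` is of one of these two kinds, so the map is continuous;
being bijective, it maps each `Z(μ ∖ F) × {i}` onto a cylinder, and these sets generate the
topology of `∂E × ℕ`, so it is open.
-/

namespace DirGraph

variable {Γ : DirGraph}

lemma isPathList_append {u v w : Γ.V} {l l' : List Γ.E}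
    (h : Γ.IsPathList u l v) (h' : Γ.IsPathList v l' w) : Γ.IsPathList u (l ++ l') w := by
  induction h with
  | nil => exact h'
  | cons e hv _ ih => exact .cons e hv (ih h')

namespace BPath

lemma src_cons (e : Γ.E) (x : Γ.BPath) (h : x.src = Γ.r e) : (x.cons e h).src = Γ.s e := by
  cases x <;> rfl

lemma edge?_cons_zero (e : Γ.E) (x : Γ.BPath) (h : x.src = Γ.r e) :
    (x.cons e h).edge? 0 = some e := by
  cases x <;> rfl

lemma edge?_cons_succ (e : Γ.E) (x : Γ.BPath) (h : x.src = Γ.r e) (n : ℕ) :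
    (x.cons e h).edge? (n + 1) = x.edge? n := by
  cases x <;> rfl

lemma tail_cons (e : Γ.E) (x : Γ.BPath) (h : x.src = Γ.r e) : (x.cons e h).tail = x := by
  cases x with
  | fin p hb =>
    obtain ⟨v, l, w, hp⟩ := p
    cases h
    rfl
  | inf x => rfl

lemma consE_of_src_eq {e : Γ.E} {x : Γ.BPath} (h : x.src = Γ.r e) : consE e x = x.cons e h :=
  dif_pos h

lemma exists_eq_cons {y : Γ.BPath} (hy : ¬ Γ.IsBoundaryVertex y.src) :
    ∃ (e : Γ.E) (x : Γ.BPath) (h : x.src = Γ.r e), y = x.cons e h := by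
  cases y with
  | fin p hb =>
    obtain ⟨v, l, w, hp⟩ := p
    cases hp with
    | nil => exact absurd hb hy
    | cons e hv hrest =>
      subst hv
      exact ⟨e, .fin ⟨_, _, _, hrest⟩ hb, rfl, rfl⟩
  | inf x =>
    refine ⟨x.edges 0, .inf ⟨fun n => x.edges (n + 1), fun n => x.compat (n + 1)⟩,
      (x.compat 0).symm, ?_⟩
    obtain ⟨f, hf⟩ := x
    congr
    funext n
    cases n <;> rfl

lemma src_foldr_consE {v w : Γ.V} {l : List Γ.E} (hp : Γ.IsPathList v l w) {y : Γ.BPath}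
    (hy : y.src = w) : (l.foldr consE y).src = v := by
  induction hp with
  | nil => exact hy
  | cons e hv _ ih =>
    rw [List.foldr_cons, consE_of_src_eq (ih hy), src_cons, hv]

lemma edge?_foldr_consE_of_lt {v w : Γ.V} {l : List Γ.E} (hp : Γ.IsPathList v l w)
    {y : Γ.BPath} (hy : y.src = w) {n : ℕ} (hn : n < l.length) :
    (l.foldr consE y).edge? n = l[n]? := by
  induction hp generalizing n with
  | nil => simp at hn
  | cons e _ hrest ih =>
    rw [List.foldr_cons, consE_of_src_eq (src_foldr_consE hrest hy)]
    cases n with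
    | zero => rw [edge?_cons_zero]; rfl
    | succ n => rw [edge?_cons_succ, ih hy (by simpa using hn)]; rfl

lemma edge?_foldr_consE_add {v w : Γ.V} {l : List Γ.E} (hp : Γ.IsPathList v l w)
    {y : Γ.BPath} (hy : y.src = w) (n : ℕ) :
    (l.foldr consE y).edge? (l.length + n) = y.edge? n := by
  induction hp with
  | nil => simp
  | cons e _ hrest ih =>
    rw [List.foldr_cons, consE_of_src_eq (src_foldr_consE hrest hy), List.length_cons,
      Nat.add_right_comm, edge?_cons_succ, ih hy]

lemma src_concat (μ : Γ.FinPath) {x : Γ.BPath} (hx : x.src = μ.rng) :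
    (concat μ x).src = μ.src :=
  src_foldr_consE μ.isPath hx

lemma edge?_concat_of_lt (μ : Γ.FinPath) {x : Γ.BPath} (hx : x.src = μ.rng) {n : ℕ}
    (hn : n < μ.edges.length) : (concat μ x).edge? n = μ.edges[n]? :=
  edge?_foldr_consE_of_lt μ.isPath hx hn

lemma edge?_concat_add (μ : Γ.FinPath) {x : Γ.BPath} (hx : x.src = μ.rng) (n : ℕ) :
    (concat μ x).edge? (μ.edges.length + n) = x.edge? n :=
  edge?_foldr_consE_add μ.isPath hx n

lemma concat_mem_cyl_iff {μ ν ρ : Γ.FinPath} {x : Γ.BPath} (F : Finset Γ.E)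
    (hx : x.src = μ.rng) (hν : ν.src = μ.rng) (hsrc : ρ.src = μ.src)
    (hedges : ρ.edges = μ.edges ++ ν.edges) :
    concat μ x ∈ cyl ρ F ↔ x ∈ cyl ν F := by
  simp only [cyl, hasPrefix, Set.mem_ofPred_eq, hedges, List.length_append, src_concat μ hx,
    hsrc, true_and, hx, hν, ← edge?_concat_add μ hx]
  refine and_congr ⟨fun h n hn => ?_, fun h n hn => ?_⟩ Iff.rfl
  · rw [h _ (by omega), List.getElem?_append_right (by omega), Nat.add_sub_cancel_left]
  · rcases lt_or_ge n μ.edges.length with hnμ | hnμ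
    · rw [edge?_concat_of_lt μ hx hnμ, List.getElem?_append_left hnμ]
    · obtain ⟨m, rfl⟩ := Nat.exists_eq_add_of_le hnμ
      rw [h m (by omega), List.getElem?_append_right (by omega), Nat.add_sub_cancel_left]

lemma mem_cyl_ofVertex_iff {v : Γ.V} {F : Finset Γ.E} {x : Γ.BPath} :
    x ∈ cyl (FinPath.ofVertex Γ v) F ↔ x.src = v ∧ ∀ e ∈ F, x.edge? 0 ≠ some e := by
  simp [cyl, hasPrefix, FinPath.ofVertex]

lemma isOpen_cyl {μ : Γ.FinPath} {F : Finset Γ.E} (hF : ∀ e ∈ F, Γ.s e = μ.rng) :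
    IsOpen (cyl μ F) :=
  TopologicalSpace.isOpen_generateFrom_of_mem ⟨μ, F, hF, rfl⟩

lemma isOpen_setOf_src_eq (v : Γ.V) : IsOpen {x : Γ.BPath | x.src = v} := by
  convert isOpen_cyl (μ := FinPath.ofVertex Γ v) (F := ∅) (by simp) using 1
  ext x
  simp [mem_cyl_ofVertex_iff]

end BPath

lemma stab_s_eq_inl_iff {e : Γ.stab.E} {v : Γ.V} :
    Γ.stab.s e = Sum.inl v ↔ ∃ e₀ : Γ.E, e = Sum.inl e₀ ∧ Γ.s e₀ = v := by
  cases e <;> simp [stab]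

lemma stab_s_eq_inr_iff {e : Γ.stab.E} {p : Γ.V × ℕ} :
    Γ.stab.s e = Sum.inr p ↔ e = Sum.inr p := by
  cases e <;> simp [stab]

lemma stab_r_eq_inr_iff {e : Γ.stab.E} {v : Γ.V} {k : ℕ} :
    Γ.stab.r e = Sum.inr (v, k) ↔ e = Sum.inr (v, k + 1) := by
  rcases e with e | ⟨w, _ | j⟩ <;> simp [stab]

lemma stab_r_inr (v : Γ.V) (j : ℕ) : Γ.stab.r (Sum.inr (v, j)) = headSrcV Γ v j := by
  cases j <;> rfl

lemma headSrcV_injective2 : Function.Injective2 (headSrcV Γ) := by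
  intro v v' i i' h
  cases i <;> cases i' <;> simp_all [headSrcV, stab]

lemma isBoundaryVertex_of_stab_inl {v : Γ.V} (h : Γ.stab.IsBoundaryVertex (Sum.inl v)) :
    Γ.IsBoundaryVertex v := by
  refine h.imp (fun hsink e he => hsink (Sum.inl e) (congrArg Sum.inl he)) fun hinf => ?_
  refine Set.Infinite.of_image Sum.inl (hinf.mono fun e he => ?_)
  obtain ⟨e₀, rfl, he₀⟩ := stab_s_eq_inl_iff.1 he
  exact ⟨e₀, he₀, rfl⟩

lemma not_isBoundaryVertex_stab_inr (p : Γ.V × ℕ) : ¬ Γ.stab.IsBoundaryVertex (Sum.inr p) := by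
  rintro (hsink | hinf)
  · exact hsink (Sum.inr p) rfl
  · exact hinf ((Set.finite_singleton (Sum.inr p)).subset fun e he => stab_s_eq_inr_iff.1 he)

lemma stab_isPathList_to_inl {u : Γ.stab.V} {l : List Γ.stab.E} {w : Γ.V}
    (h : Γ.stab.IsPathList u l (Sum.inl w)) :
    ∃ (i : ℕ) (v : Γ.V) (l₀ : List Γ.E), u = headSrcV Γ v i ∧
      l = headEdges Γ v i ++ (l₀.map Sum.inl : List Γ.stab.E) ∧ Γ.IsPathList v l₀ w := by
  induction l generalizing u with
  | nil => cases h; exact ⟨0, w, [], rfl, rfl, .nil w⟩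
  | cons e l ih =>
    obtain _ | ⟨_, rfl, hrest⟩ := h
    obtain ⟨i, v, l₀, hi, rfl, hp⟩ := ih hrest
    rcases e with e₀ | ⟨v', j⟩
    · obtain ⟨rfl, rfl⟩ : i = 0 ∧ v = Γ.r e₀ := by
        cases i with
        | zero => exact ⟨rfl, (Sum.inl_injective hi).symm⟩
        | succ i => exact (Sum.inl_ne_inr hi).elim
      exact ⟨0, Γ.s e₀, e₀ :: l₀, rfl, rfl, .cons e₀ rfl hp⟩
    · obtain ⟨rfl, rfl⟩ := headSrcV_injective2 ((stab_r_inr v' j).symm.trans hi)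
      exact ⟨j + 1, v', l₀, rfl, rfl, hp⟩

lemma stab_isPathList_to_inr {u : Γ.stab.V} {l : List Γ.stab.E} {v : Γ.V} {k : ℕ}
    (h : Γ.stab.IsPathList u l (Sum.inr (v, k))) :
    u = Sum.inr (v, k + l.length) ∧
      l ++ headEdges Γ v (k + 1) = headEdges Γ v (k + l.length + 1) := by
  induction l generalizing u with
  | nil => cases h; exact ⟨rfl, rfl⟩
  | cons e l ih =>
    obtain _ | ⟨_, rfl, hrest⟩ := h
    obtain ⟨hr, hl⟩ := ih hrest
    obtain rfl := stab_r_eq_inr_iff.1 hr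
    exact ⟨rfl, congrArg (List.cons _) hl⟩

namespace BPath

lemma src_toStab (x : Γ.BPath) : x.toStab.src = Sum.inl x.src := by
  cases x <;> rfl

lemma edge?_toStab (x : Γ.BPath) (n : ℕ) : x.toStab.edge? n = (x.edge? n).map Sum.inl := by
  cases x with
  | fin p hb => exact List.getElem?_map ..
  | inf y => rfl

lemma toStab_injective : Function.Injective (toStab (Γ := Γ)) := by
  rintro (⟨⟨v, l, w, hp⟩, hb⟩ | ⟨f, hf⟩) (⟨⟨v', l', w', hp'⟩, hb'⟩ | ⟨f', hf'⟩) h <;>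
    simp only [toStab, FinPath.toStab, InfPath.toStab, fin.injEq, inf.injEq, reduceCtorEq] at h
  · injection h with hv hl hw
    obtain rfl := Sum.inl_injective hv
    obtain rfl := List.map_injective_iff.2 Sum.inl_injective hl
    obtain rfl := Sum.inl_injective hw
    rfl
  · injection h with h
    obtain rfl : f = f' := funext fun n => Sum.inl_injective (congrFun h n)
    rfl

lemma exists_toStab_eq {y : Γ.stab.BPath} {v : Γ.V} (hy : y.src = Sum.inl v) :
    ∃ x : Γ.BPath, x.toStab = y := by
  cases y with
  | fin p hb =>
    obtain ⟨u, l, w, hp⟩ := p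
    obtain ⟨w, rfl⟩ : ∃ w₀, w = Sum.inl w₀ := by
      rcases w with w₀ | q
      · exact ⟨w₀, rfl⟩
      · exact (not_isBoundaryVertex_stab_inr q hb).elim
    obtain ⟨i, v', l₀, rfl, rfl, hp₀⟩ := stab_isPathList_to_inl hp
    cases i with
    | zero => exact ⟨.fin ⟨v', l₀, w, hp₀⟩ (isBoundaryVertex_of_stab_inl hb), rfl⟩
    | succ i => exact (Sum.inl_ne_inr hy.symm).elim
  | inf z =>
    have hinl : ∀ n, ∃ e₀ : Γ.E, z.edges n = Sum.inl e₀ := by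
      intro n
      induction n with
      | zero => obtain ⟨e₀, he₀, -⟩ := stab_s_eq_inl_iff.1 hy; exact ⟨e₀, he₀⟩
      | succ n ih =>
        obtain ⟨e₀, he₀⟩ := ih
        have hs : Γ.stab.s (z.edges (n + 1)) = Sum.inl (Γ.r e₀) := by rw [← z.compat, he₀]; rfl
        obtain ⟨e₁, he₁, -⟩ := stab_s_eq_inl_iff.1 hs
        exact ⟨e₁, he₁⟩
    choose f hf using hinl
    refine ⟨.inf ⟨f, fun n => ?_⟩, ?_⟩
    · have h := z.compat n
      rw [hf, hf] at h
      exact Sum.inl_injective h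
    · obtain ⟨g, hg⟩ := z
      simp only [toStab, InfPath.toStab, inf.injEq]
      congr 1
      exact funext fun n => (hf n).symm

end BPath

noncomputable def stabMap (Γ : DirGraph) (q : Γ.BPath × ℕ) : Γ.stab.BPath :=
  BPath.concat (headPath Γ q.1.src q.2) q.1.toStab

lemma src_stabMap (x : Γ.BPath) (i : ℕ) : (stabMap Γ (x, i)).src = headSrcV Γ x.src i :=
  BPath.src_concat _ x.src_toStab

lemma stabMap_succ (x : Γ.BPath) (i : ℕ) :
    stabMap Γ (x, i + 1) = (stabMap Γ (x, i)).cons (Sum.inr (x.src, i))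
      ((src_stabMap x i).trans (stab_r_inr x.src i).symm) :=
  BPath.consE_of_src_eq _

lemma edge?_stabMap_succ_zero (x : Γ.BPath) (i : ℕ) :
    (stabMap Γ (x, i + 1)).edge? 0 = some (Sum.inr (x.src, i)) := by
  rw [stabMap_succ]
  exact BPath.edge?_cons_zero _ _ _

lemma tail_stabMap_succ (x : Γ.BPath) (i : ℕ) :
    (stabMap Γ (x, i + 1)).tail = stabMap Γ (x, i) := by
  rw [stabMap_succ]
  exact BPath.tail_cons _ _ _

lemma stabMap_injective : Function.Injective (stabMap Γ) := by
  rintro ⟨x, i⟩ ⟨x', i'⟩ h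
  obtain ⟨-, rfl⟩ := headSrcV_injective2 ((src_stabMap x i).symm.trans (h ▸ src_stabMap x' i'))
  refine Prod.ext ?_ rfl
  induction i with
  | zero => exact BPath.toStab_injective h
  | succ i ih =>
    exact ih (by rw [← tail_stabMap_succ x, h, tail_stabMap_succ])

lemma exists_stabMap_eq {v : Γ.V} {i : ℕ} {y : Γ.stab.BPath} (hy : y.src = headSrcV Γ v i) :
    ∃ x : Γ.BPath, x.src = v ∧ stabMap Γ (x, i) = y := by
  induction i generalizing y with
  | zero =>
    obtain ⟨x, rfl⟩ := BPath.exists_toStab_eq hy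
    exact ⟨x, Sum.inl_injective (x.src_toStab.symm.trans hy), rfl⟩
  | succ i ih =>
    obtain ⟨e, y, h, rfl⟩ := BPath.exists_eq_cons (Γ := Γ.stab)
      (by rw [hy]; exact not_isBoundaryVertex_stab_inr (v, i))
    obtain rfl : e = Sum.inr (v, i) :=
      stab_s_eq_inr_iff.1 ((BPath.src_cons e y h).symm.trans hy)
    obtain ⟨x, rfl, rfl⟩ := ih (h.trans (stab_r_inr _ i))
    exact ⟨x, rfl, stabMap_succ x i⟩

lemma stabMap_surjective : Function.Surjective (stabMap Γ) := by
  intro y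
  obtain ⟨v, i, hy⟩ : ∃ v i, y.src = headSrcV Γ v i := by
    rcases hv : y.src with v | ⟨v, i⟩
    · exact ⟨v, 0, rfl⟩
    · exact ⟨v, i + 1, rfl⟩
  obtain ⟨x, -, hx⟩ := exists_stabMap_eq hy
  exact ⟨(x, i), hx⟩

lemma stabMap_bijective : Function.Bijective (stabMap Γ) :=
  ⟨stabMap_injective, stabMap_surjective⟩

-- rather than `Function.Embedding.inl`, whose codomain is only semireducibly `Γ.stab.E`
def stabInl (Γ : DirGraph) : Γ.E ↪ Γ.stab.E := ⟨Sum.inl, Sum.inl_injective⟩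

-- `μ_{i,s(μ)} μ` in the notation of the paper
def FinPath.withHead (μ : Γ.FinPath) (i : ℕ) : Γ.stab.FinPath :=
  ⟨headSrcV Γ μ.src i, headEdges Γ μ.src i ++ (μ.edges.map Sum.inl : List Γ.stab.E),
    Sum.inl μ.rng, isPathList_append (headIsPath Γ μ.src i) (isPathList_map_inl μ.isPath)⟩

lemma BPath.toStab_mem_cyl_iff {x : Γ.BPath} {μ : Γ.FinPath} {F : Finset Γ.E} :
    x.toStab ∈ BPath.cyl μ.toStab (F.map (stabInl Γ)) ↔ x ∈ BPath.cyl μ F := by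
  have hsrc : μ.toStab.src = Sum.inl μ.src := rfl
  have hlen : μ.toStab.edges.length = μ.edges.length := List.length_map ..
  have hget (n : ℕ) : μ.toStab.edges[n]? = μ.edges[n]?.map Sum.inl := List.getElem?_map ..
  have he : Function.Injective (Option.map (Sum.inl : Γ.E → Γ.stab.E)) :=
    Option.map_injective Sum.inl_injective
  simp only [BPath.cyl, BPath.hasPrefix, Set.mem_ofPred_eq, src_toStab, edge?_toStab, hsrc, hlen,
    hget]
  refine and_congr (and_congr Sum.inl_injective.eq_iff (forall₂_congr fun n _ => he.eq_iff)) ?_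
  rw [Finset.forall_mem_map]
  exact forall₂_congr fun e _ => he.ne_iff' rfl

lemma stabMap_mem_cyl_withHead_iff {x : Γ.BPath} {j i : ℕ} {μ : Γ.FinPath} {F : Finset Γ.E} :
    stabMap Γ (x, j) ∈ BPath.cyl (μ.withHead i) (F.map (stabInl Γ)) ↔
      x ∈ BPath.cyl μ F ∧ j = i := by
  have key (hx : x.src = μ.src) :
      stabMap Γ (x, i) ∈ BPath.cyl (μ.withHead i) (F.map (stabInl Γ)) ↔ x ∈ BPath.cyl μ F :=
    (BPath.concat_mem_cyl_iff (μ := headPath Γ x.src i) (ν := μ.toStab) (ρ := μ.withHead i) _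
      x.src_toStab (congrArg Sum.inl hx.symm) (congrArg (headSrcV Γ · i) hx.symm)
      (congrArg (headEdges Γ · i ++ _) hx.symm)).trans BPath.toStab_mem_cyl_iff
  constructor
  · intro h
    obtain ⟨hx, rfl⟩ := headSrcV_injective2 ((src_stabMap x j).symm.trans h.1.1)
    exact ⟨(key hx).1 h, rfl⟩
  · rintro ⟨h, rfl⟩
    exact (key h.1.1).2 h

lemma preimage_stabMap_cyl_withHead (μ : Γ.FinPath) (F : Finset Γ.E) (i : ℕ) :
    stabMap Γ ⁻¹' BPath.cyl (μ.withHead i) (F.map (stabInl Γ)) = BPath.cyl μ F ×ˢ {i} := by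
  ext ⟨x, j⟩
  exact stabMap_mem_cyl_withHead_iff

lemma stabMap_mem_cyl_iff_of_rng_inr {x : Γ.BPath} {j : ℕ} {μ : Γ.stab.FinPath}
    {F : Finset Γ.stab.E} {v : Γ.V} {k : ℕ} (hμ : μ.rng = Sum.inr (v, k)) :
    stabMap Γ (x, j) ∈ BPath.cyl μ F ↔
      (x.src = v ∧ Sum.inr (v, k) ∉ F) ∧ j = k + μ.edges.length + 1 := by
  obtain ⟨hsrc, hedges⟩ := stab_isPathList_to_inr (hμ ▸ μ.isPath)
  replace hsrc : μ.src = headSrcV Γ v (k + μ.edges.length + 1) := hsrc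
  have key (hx : x.src = v) : stabMap Γ (x, k + μ.edges.length + 1) ∈ BPath.cyl μ F ↔
      Sum.inr (v, k) ∉ F := by
    have hsplit :
        stabMap Γ (x, k + μ.edges.length + 1) = BPath.concat μ (stabMap Γ (x, k + 1)) := by
      subst hx
      simp only [stabMap, BPath.concat, headPath, ← hedges, List.foldr_append]
    have hsrc' : (stabMap Γ (x, k + 1)).src = μ.rng := by rw [src_stabMap, hx, hμ]; rfl
    rw [hsplit, BPath.concat_mem_cyl_iff (ν := FinPath.ofVertex _ μ.rng) F hsrc' rfl rfl
      (List.append_nil _).symm, BPath.mem_cyl_ofVertex_iff, edge?_stabMap_succ_zero, hx]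
    exact ⟨fun h hF => h.2 _ hF rfl,
      fun h => ⟨hsrc', fun e he hve => h (by rwa [Option.some.inj hve])⟩⟩
  constructor
  · intro h
    obtain ⟨hx, rfl⟩ := headSrcV_injective2 ((src_stabMap x j).symm.trans (h.1.1.trans hsrc))
    exact ⟨⟨hx, (key hx).1 h⟩, rfl⟩
  · rintro ⟨⟨hx, hF⟩, rfl⟩
    exact (key hx).2 hF

lemma exists_eq_map_stabInl {F : Finset Γ.stab.E} {w : Γ.V}
    (hF : ∀ e ∈ F, Γ.stab.s e = Sum.inl w) :
    ∃ F₀ : Finset Γ.E, (∀ e ∈ F₀, Γ.s e = w) ∧ F = F₀.map (stabInl Γ) := by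
  refine ⟨F.preimage Sum.inl Sum.inl_injective.injOn,
    fun e he => Sum.inl_injective (hF _ (Finset.mem_preimage.1 he)), ?_⟩
  ext e
  refine ⟨fun he => ?_, fun he => ?_⟩
  · obtain ⟨e₀, rfl, -⟩ := stab_s_eq_inl_iff.1 (hF e he)
    exact Finset.mem_map.2 ⟨e₀, Finset.mem_preimage.2 he, rfl⟩
  · obtain ⟨e₀, he₀, rfl⟩ := Finset.mem_map.1 he
    exact Finset.mem_preimage.1 he₀

lemma continuous_stabMap : Continuous (stabMap Γ) := by
  refine continuous_generateFrom_iff.2 ?_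
  rintro _ ⟨⟨u, l, w, hp⟩, F, hF, rfl⟩
  rcases w with w | ⟨v, k⟩
  · obtain ⟨i, v, l₀, rfl, rfl, hp₀⟩ := stab_isPathList_to_inl hp
    obtain ⟨F₀, hF₀, rfl⟩ := exists_eq_map_stabInl hF
    rw [show (⟨_, _, _, hp⟩ : Γ.stab.FinPath) = FinPath.withHead ⟨v, l₀, w, hp₀⟩ i from rfl,
      preimage_stabMap_cyl_withHead]
    exact (BPath.isOpen_cyl hF₀).prod (isOpen_discrete _)
  · have hpre : stabMap Γ ⁻¹' BPath.cyl ⟨u, l, _, hp⟩ F =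
        ({x | x.src = v} ∩ {_x | Sum.inr (v, k) ∉ F}) ×ˢ {k + l.length + 1} := by
      ext ⟨x, j⟩
      exact stabMap_mem_cyl_iff_of_rng_inr rfl
    rw [hpre]
    exact ((BPath.isOpen_setOf_src_eq v).inter isOpen_const).prod (isOpen_discrete _)

lemma isOpen_image_stabMap_cyl_prod {μ : Γ.FinPath} {F : Finset Γ.E}
    (hF : ∀ e ∈ F, Γ.s e = μ.rng) (i : ℕ) : IsOpen (stabMap Γ '' (BPath.cyl μ F ×ˢ {i})) := by
  rw [← preimage_stabMap_cyl_withHead, Set.image_preimage_eq _ stabMap_surjective]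
  refine BPath.isOpen_cyl fun e he => ?_
  obtain ⟨e₀, he₀, rfl⟩ := Finset.mem_map.1 he
  exact congrArg Sum.inl (hF e₀ he₀)

lemma iUnion_cyl_ofVertex : ⋃ v, BPath.cyl (FinPath.ofVertex Γ v) ∅ = Set.univ :=
  Set.eq_univ_of_forall fun x =>
    Set.mem_iUnion.2 ⟨x.src, BPath.mem_cyl_ofVertex_iff.2 ⟨rfl, by simp⟩⟩

lemma continuous_stabMap_symm :
    Continuous (Equiv.ofBijective _ (stabMap_bijective (Γ := Γ))).symm := by
  set e := Equiv.ofBijective _ (stabMap_bijective (Γ := Γ))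
  have hfst : Continuous fun y => (e.symm y).1 := by
    refine continuous_generateFrom_iff.2 ?_
    rintro _ ⟨μ, F, hF, rfl⟩
    have : (fun y => (e.symm y).1) ⁻¹' BPath.cyl μ F = ⋃ i, e '' (BPath.cyl μ F ×ˢ {i}) := by
      rw [← Set.image_iUnion, ← Set.prod_iUnion, Set.iUnion_of_singleton, Set.prod_univ,
        e.image_eq_preimage_symm]
      rfl
    rw [this]
    exact isOpen_iUnion fun i => isOpen_image_stabMap_cyl_prod hF i
  have hsnd : Continuous fun y => (e.symm y).2 := by
    refine continuous_discrete_rng.2 fun i => ?_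
    have : (fun y => (e.symm y).2) ⁻¹' {i} =
        ⋃ v, e '' (BPath.cyl (FinPath.ofVertex Γ v) ∅ ×ˢ {i}) := by
      rw [← Set.image_iUnion, ← Set.iUnion_prod_const, iUnion_cyl_ofVertex, Set.univ_prod,
        e.image_eq_preimage_symm]
      rfl
    rw [this]
    exact isOpen_iUnion fun v => isOpen_image_stabMap_cyl_prod (by simp) i
  exact hfst.prodMk hsnd

noncomputable def stabHomeomorph (Γ : DirGraph) : Γ.BPath × ℕ ≃ₜ Γ.stab.BPath :=
  .mk (.ofBijective _ stabMap_bijective) continuous_stabMap continuous_stabMap_symm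

end DirGraph

open DirGraph in
/-- For a directed graph `E`, the map `(x, i) ↦ μ_{i,s(x)} x` is a bijection and a
homeomorphism from `∂E × ℕ` onto `∂(SE)`; equivalently, `∂(SE) = {μ_{i,s(x)}x : x ∈ ∂E, i ∈ ℕ}`
with unique representations, and `μ_{i,s(x)}x ↦ (x, i)` is a homeomorphism `∂(SE) ≅ ∂E × ℕ`. -/
theorem stab_boundary_path_space_homeomorph (Γ : DirGraph.{u}) :
    Function.Bijective (fun q : Γ.BPath × ℕ =>
      DirGraph.BPath.concat (headPath Γ q.1.src q.2) q.1.toStab) ∧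
    IsHomeomorph (fun q : Γ.BPath × ℕ =>
      DirGraph.BPath.concat (headPath Γ q.1.src q.2) q.1.toStab) :=
  ⟨stabMap_bijective, (stabHomeomorph Γ).isHomeomorph⟩
end
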